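/- arXiv:0809.5166 — 3 statements merged into one kernel-verified Lean document; each statement's English description precedes it below -/
import Mathlib

section
/- Let k be a field, G a finite group whose order is not divisible by the characteristic of k, α a 2-cocycle on G with values in kˣ, and R an α-representation of G on a k-vector space V. If U is a subspace of V with R(g)(U) ⊆ U for all g ∈ G, then there exists a subspace W of V with R(g)(W) ⊆ W for all g ∈ G and V = U ⊕ W (i.e., U and W are complementary). In other words, every invariant subspace of an α-representation of G has an invariant complement. -/
/-!
Conjugation by an `α`-representation `R` is an honest representation of `G` on `End V`, since the
scalars `α g h` cancel. Averaging any projection onto `U` under this action gives a projection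
onto `U` (each conjugate is one, as `U` is stable under every `R g` and, up to a scalar, under
every `(R g)⁻¹`) that commutes with every `R g`, so its kernel is an invariant complement.
-/

open LinearMap

theorem LinearEquiv.conj_eq_of_toLinearMap_eq_smul {R M N : Type*} [CommSemiring R]
    [AddCommMonoid M] [Module R M] [AddCommMonoid N] [Module R N] {e e' : M ≃ₗ[R] N} {c : Rˣ}
    (h : e.toLinearMap = (c : R) • e'.toLinearMap) : e.conj = e'.conj := by
  have he : ∀ x, e x = (c : R) • e' x := fun x => LinearMap.congr_fun h x
  have he_symm : ∀ y, e.symm y = (↑c⁻¹ : R) • e'.symm y := fun y => by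
    apply e.injective
    rw [apply_symm_apply, map_smul, he, apply_symm_apply, smul_smul, Units.inv_mul, one_smul]
  ext f y
  rw [conj_apply_apply, conj_apply_apply, he_symm, f.map_smul, e.map_smul, he, smul_smul,
    Units.inv_mul, one_smul]

namespace LinearMap.IsProj

variable {R M : Type*} [CommSemiring R] [AddCommMonoid M] [Module R M] {m : Submodule R M}
  {f : Module.End R M}

theorem conj (hf : IsProj m f) {e : M ≃ₗ[R] M} (he : ∀ x ∈ m, e x ∈ m)
    (he_symm : ∀ x ∈ m, e.symm x ∈ m) : IsProj m (e.conj f) where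
  map_mem x := he _ (hf.map_mem _)
  map_id x hx := by rw [LinearEquiv.conj_apply_apply, hf.map_id _ (he_symm x hx),
    LinearEquiv.apply_symm_apply]

theorem average {ι : Type*} [Fintype ι] [Invertible (Fintype.card ι : R)]
    {f : ι → Module.End R M} (hf : ∀ i, IsProj m (f i)) :
    IsProj m (⅟(Fintype.card ι : R) • ∑ i, f i) where
  map_mem x := by
    rw [smul_apply, sum_apply]
    exact m.smul_mem _ (m.sum_mem fun i _ => (hf i).map_mem x)
  map_id x hx := by
    rw [smul_apply, sum_apply, Finset.sum_congr rfl fun i _ => (hf i).map_id x hx,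
      Finset.sum_const, Finset.card_univ, ← Nat.cast_smul_eq_nsmul R, smul_smul,
      invOf_mul_self, one_smul]

end LinearMap.IsProj

theorem Representation.averageMap_apply {k G W : Type*} [CommRing k] [Group G] [Fintype G]
    [AddCommGroup W] [Module k W] [Invertible (Fintype.card G : k)] (ρ : Representation k G W)
    (w : W) :
    ρ.averageMap w = ⅟(Fintype.card G : k) • ∑ g, ρ g w := by
  simp [GroupAlgebra.average, map_sum]

/-- `R` is an `α`-representation. -/
def IsTwistedRep {k G V : Type*} [CommSemiring k] [Mul G] [AddCommMonoid V] [Module k V]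
    (α : G → G → kˣ) (R : G → V ≃ₗ[k] V) : Prop :=
  ∀ g h : G, (R g).toLinearMap ∘ₗ (R h).toLinearMap = (α g h : k) • (R (g * h)).toLinearMap

namespace IsTwistedRep

variable {k G V : Type*} [CommRing k] [Group G] [AddCommGroup V] [Module k V]
  {α : G → G → kˣ} {R : G → V ≃ₗ[k] V}

theorem apply_apply (hR : IsTwistedRep α R) (g h : G) (v : V) :
    R g (R h v) = (α g h : k) • R (g * h) v :=
  LinearMap.congr_fun (hR g h) v

theorem conj_mul (hR : IsTwistedRep α R) (g h : G) (f : Module.End k V) :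
    (R (g * h)).conj f = (R g).conj ((R h).conj f) := by
  have hconj : ((R h).trans (R g)).conj = (R (g * h)).conj :=
    LinearEquiv.conj_eq_of_toLinearMap_eq_smul (by rw [LinearEquiv.coe_trans, hR g h])
  rw [← hconj, ← LinearEquiv.conj_trans]
  rfl

theorem conj_one (hR : IsTwistedRep α R) (f : Module.End k V) : (R 1).conj f = f :=
  (R 1).conj.injective (by rw [← conj_mul hR, mul_one])

def conjRep (hR : IsTwistedRep α R) : Representation k G (Module.End k V) where
  toFun g := (R g).conj.toLinearMap
  map_one' := LinearMap.ext (conj_one hR)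
  map_mul' g h := LinearMap.ext (conj_mul hR g h)

theorem conjRep_apply (hR : IsTwistedRep α R) (g : G) (f : Module.End k V) :
    conjRep hR g f = (R g).conj f :=
  rfl

theorem apply_comm_of_mem_invariants (hR : IsTwistedRep α R) {f : Module.End k V}
    (hf : f ∈ (conjRep hR).invariants) (g : G) (v : V) : f (R g v) = R g (f v) := by
  have h := LinearMap.congr_fun (hf g) (R g v)
  rw [conjRep_apply, LinearEquiv.conj_apply_apply, LinearEquiv.symm_apply_apply] at h
  exact h.symm

theorem one_apply (hR : IsTwistedRep α R) (v : V) : R 1 v = (α 1 1 : k) • v :=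
  (R 1).injective (by rw [apply_apply hR, mul_one, map_smul])

theorem symm_apply (hR : IsTwistedRep α R) (g : G) (v : V) :
    (R g).symm v = (↑(α g g⁻¹ * α 1 1)⁻¹ : k) • R g⁻¹ v :=
  (R g).injective (by
    rw [LinearEquiv.apply_symm_apply, map_smul, apply_apply hR, mul_inv_cancel, one_apply hR,
      smul_smul, smul_smul, ← Units.val_mul, ← Units.val_mul, mul_assoc, inv_mul_cancel,
      Units.val_one, one_smul])

theorem symm_apply_mem (hR : IsTwistedRep α R) {U : Submodule k V}
    (hU : ∀ g : G, ∀ u ∈ U, R g u ∈ U) (g : G) {u : V} (hu : u ∈ U) : (R g).symm u ∈ U := by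
  rw [symm_apply hR]
  exact U.smul_mem _ (hU _ u hu)

end IsTwistedRep

open IsTwistedRep

theorem twisted_rep_invariant_complement_general
    {k : Type*} [Field k] {G : Type*} [Group G] [Fintype G]
    {V : Type*} [AddCommGroup V] [Module k V]
    (hchar : ¬ (ringChar k ∣ Fintype.card G))
    (α : G → G → kˣ)
    (R : G → V ≃ₗ[k] V)
    (hR : ∀ g h : G,
      (R g).toLinearMap ∘ₗ (R h).toLinearMap = ((α g h : k)) • (R (g * h)).toLinearMap)
    (U : Submodule k V)
    (hU : ∀ g : G, ∀ u ∈ U, R g u ∈ U) :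
    ∃ W : Submodule k V, (∀ g : G, ∀ w ∈ W, R g w ∈ W) ∧ IsCompl U W := by
  have : Invertible (Fintype.card G : k) := invertibleOfRingCharNotDvd hchar
  obtain ⟨W₀, hW₀⟩ := U.exists_isCompl
  have hπ : IsProj U (U.projection W₀ hW₀) :=
    ⟨U.projection_apply_mem hW₀, fun _ => U.projection_apply_of_mem_left hW₀⟩
  have hp : IsProj U ((conjRep hR).averageMap (U.projection W₀ hW₀)) := by
    rw [Representation.averageMap_apply]
    exact IsProj.average fun g => hπ.conj (hU g) fun _ => symm_apply_mem hR hU g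
  refine ⟨ker _, fun g w hw => ?_, hp.isCompl⟩
  rw [mem_ker, apply_comm_of_mem_invariants hR ((conjRep hR).averageMap_invariant _), hw,
    map_zero]

/-- Let `G` be a finite group whose order is not divisible by the characteristic of the
field `k`, `α` a 2-cocycle on `G` with values in `kˣ`, and `R` an `α`-representation of `G`
on a `k`-vector space `V`.  Then every `R`-invariant subspace `U` of `V` has an
`R`-invariant complement `W` (so `V = U ⊕ W`). -/
theorem twisted_rep_invariant_complement
    {k : Type*} [Field k] {G : Type*} [Group G] [Fintype G]
    {V : Type*} [AddCommGroup V] [Module k V]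
    (hchar : ¬ (ringChar k ∣ Fintype.card G))
    (α : G → G → kˣ)
    (hα : ∀ g h l : G, α g h * α (g * h) l = α g (h * l) * α h l)
    (R : G → V ≃ₗ[k] V)
    (hR : ∀ g h : G,
      (R g).toLinearMap ∘ₗ (R h).toLinearMap = ((α g h : k)) • (R (g * h)).toLinearMap)
    (U : Submodule k V)
    (hU : ∀ g : G, ∀ u ∈ U, R g u ∈ U) :
    ∃ W : Submodule k V, (∀ g : G, ∀ w ∈ W, R g w ∈ W) ∧ IsCompl U W :=
  twisted_rep_invariant_complement_general hchar α R hR U hU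
end

section
/- Let k be an algebraically closed field of characteristic zero, G a group, and α a 2-cocycle on G with values in kˣ. Suppose there exists an α-representation of G on a finite-dimensional k-vector space V of dimension d ≥ 1. Then α is cohomologous to a cocycle valued in d-th roots of unity: there exists γ : G → kˣ such that the cocycle α'(g,h) = α(g,h)·γ(g)·γ(h)·γ(g·h)⁻¹ satisfies α'(g,h)^d = 1 for all g,h ∈ G. -/
/-- Over an algebraically closed field of characteristic zero, if a 2-cocycle `α` on `G`
admits an `α`-representation on a `d`-dimensional vector space (`d ≥ 1`), then `α` is
cohomologous to a cocycle valued in `d`-th roots of unity. -/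
theorem twisted_rep_cocycle_cohomologous_to_roots_of_unity
    {k : Type*} [Field k] [IsAlgClosed k] [CharZero k]
    {G : Type*} [Group G]
    {V : Type*} [AddCommGroup V] [Module k V] [FiniteDimensional k V]
    (d : ℕ) (hd : Module.finrank k V = d) (hd1 : 1 ≤ d)
    (α : G → G → kˣ)
    (hα : ∀ g h l : G, α g h * α (g * h) l = α g (h * l) * α h l)
    (R : G → V ≃ₗ[k] V)
    (hR : ∀ g h : G,
      (R g).toLinearMap ∘ₗ (R h).toLinearMap = ((α g h : k)) • (R (g * h)).toLinearMap) :
    ∃ γ : G → kˣ, ∀ g h : G,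
      (α g h * γ g * γ h * (γ (g * h))⁻¹) ^ d = 1 := by
  -- determinant of each R g, as a unit
  have hdet : ∀ g : G, LinearMap.det (R g).toLinearMap ≠ 0 := by
    intro g
    have := (R g).isUnit_det'
    exact this.ne_zero
  -- key equation: α^d * det R(gh) = det Rg * det Rh
  have key : ∀ g h : G, ((α g h : k)) ^ d * LinearMap.det (R (g*h)).toLinearMap
      = LinearMap.det (R g).toLinearMap * LinearMap.det (R h).toLinearMap := by
    intro g h
    have := congrArg LinearMap.det (hR g h)
    rw [LinearMap.det_comp, LinearMap.det_smul, hd] at this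
    exact this.symm
  -- choose d-th roots of determinants
  have hroot : ∀ g : G, ∃ u : kˣ, (u : k) ^ d = LinearMap.det (R g).toLinearMap := by
    intro g
    obtain ⟨z, hz⟩ := IsAlgClosed.exists_pow_nat_eq (LinearMap.det (R g).toLinearMap)
      (Nat.lt_of_lt_of_le Nat.zero_lt_one hd1)
    have hz0 : z ≠ 0 := by
      intro h0
      apply hdet g
      rw [← hz, h0, zero_pow (by omega)]
    exact ⟨Units.mk0 z hz0, hz⟩
  choose u hu using hroot
  refine ⟨fun g => (u g)⁻¹, fun g h => ?_⟩
  apply Units.ext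
  push_cast [mul_pow, inv_pow]
  rw [hu g, hu h, hu (g*h)]
  field_simp
  rw [key g h]
  exact div_self (mul_ne_zero (hdet g) (hdet h))
end

section
/- Let k be an algebraically closed field of characteristic zero and G a finite group of order n. Then every 2-cocycle α on G with values in kˣ is cohomologous to a 2-cocycle valued in n-th roots of unity: there exists γ : G → kˣ such that (α(g,h)·γ(g)·γ(h)·γ(g·h)⁻¹)^n = 1 for all g,h ∈ G. (Equivalently, the canonical map H²(G,μ_n) → H²(G,kˣ) is surjective, where μ_n ⊂ kˣ is the subgroup of n-th roots of unity.) -/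
/-!
Multiplying the cocycle identity `α g h * α (g h) l = α g (h l) * α h l` over all `l` shows that
`α ^ |G|` is the coboundary of `β g = ∏ₗ α g l`. Since `kˣ` has all `|G|`-th roots, choosing
`γ g ^ |G| = (β g)⁻¹` twists `α` into a cocycle killed by `|G|`.
-/

theorem cocycle_pow_card_mul_prod_eq {G M : Type*} [Group G] [Fintype G] [CommMonoid M]
    {α : G → G → M} (hα : ∀ g h l : G, α g h * α (g * h) l = α g (h * l) * α h l) (g h : G) :
    α g h ^ Fintype.card G * ∏ l, α (g * h) l = (∏ l, α g l) * ∏ l, α h l := by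
  have hprod : ∏ l, (α g h * α (g * h) l) = ∏ l, (α g (h * l) * α h l) :=
    Fintype.prod_congr _ _ (hα g h)
  rwa [Finset.prod_mul_distrib, Finset.prod_mul_distrib, Finset.prod_const, Finset.card_univ,
    Fintype.prod_equiv (Equiv.mulLeft h) (fun l => α g (h * l)) (α g) fun _ => rfl] at hprod

theorem twist_pow_eq_one_of_pow_mul_eq {G M : Type*} [Mul G] [CommGroup M] {n : ℕ}
    {α : G → G → M} {β γ : G → M} (hβ : ∀ g h, α g h ^ n * β (g * h) = β g * β h)
    (hγ : ∀ g, γ g ^ n = (β g)⁻¹) (g h : G) :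
    (α g h * γ g * γ h * (γ (g * h))⁻¹) ^ n = 1 := by
  rw [mul_pow, mul_pow, mul_pow, inv_pow, hγ, hγ, hγ, inv_inv, mul_right_comm _ (β h)⁻¹,
    mul_right_comm _ (β g)⁻¹, hβ, mul_right_comm (β g), mul_inv_cancel_right, mul_inv_cancel]

theorem IsAlgClosed.exists_units_pow_eq {k : Type*} [Field k] [IsAlgClosed k] (u : kˣ) {n : ℕ}
    (hn : n ≠ 0) : ∃ v : kˣ, v ^ n = u := by
  obtain ⟨z, hz⟩ := IsAlgClosed.exists_pow_nat_eq (u : k) (Nat.pos_of_ne_zero hn)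
  have hz0 : z ≠ 0 := by
    rintro rfl
    exact u.ne_zero (hz.symm.trans (zero_pow hn))
  exact ⟨Units.mk0 z hz0, Units.ext hz⟩

theorem cocycle_cohomologous_to_roots_of_unity_general
    {k : Type*} [Field k] [IsAlgClosed k]
    {G : Type*} [Group G] [Fintype G]
    (α : G → G → kˣ)
    (hα : ∀ g h l : G, α g h * α (g * h) l = α g (h * l) * α h l) :
    ∃ γ : G → kˣ, ∀ g h : G,
      (α g h * γ g * γ h * (γ (g * h))⁻¹) ^ (Fintype.card G) = 1 := by
  choose γ hγ using fun g =>
    IsAlgClosed.exists_units_pow_eq (∏ l, α g l)⁻¹ (Fintype.card_ne_zero (α := G))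
  exact ⟨γ, twist_pow_eq_one_of_pow_mul_eq (cocycle_pow_card_mul_prod_eq hα) hγ⟩

/-- Over an algebraically closed field `k` of characteristic zero, every 2-cocycle `α`
on a finite group `G` of order `n` is cohomologous to a 2-cocycle valued in `n`-th roots
of unity: the canonical map `H²(G, μ_n) → H²(G, kˣ)` is surjective. -/
theorem cocycle_cohomologous_to_roots_of_unity
    {k : Type*} [Field k] [IsAlgClosed k] [CharZero k]
    {G : Type*} [Group G] [Fintype G]
    (α : G → G → kˣ)
    (hα : ∀ g h l : G, α g h * α (g * h) l = α g (h * l) * α h l) :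
    ∃ γ : G → kˣ, ∀ g h : G,
      (α g h * γ g * γ h * (γ (g * h))⁻¹) ^ (Fintype.card G) = 1 :=
  cocycle_cohomologous_to_roots_of_unity_general α hα
end
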